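/- Let (K^{•,•}, d', d'') be a bounded double cochain complex of modules with total differential D = d' + d''. Then K satisfies the d'd''-lemma if and only if Ker(d') ∩ Ker(d'') ∩ (Im(d') + Im(d'')) = Im(d'd''). -/

import Mathlib

/-!
Since `Im D ⊆ Im d' + Im d''`, the second condition implies the `d'd''`-lemma. Conversely, a closed
`x = d'a + d''b` has `d'd''a = d'd''b = 0`, so `Da` and `Db` are closed elements of `Im D` and lie
in `Im d'd''`. For `a` of pure bidegree, `d'a` and `d''a` have different bidegrees, so each is a
bihomogeneous component of `Da` and lies in the bigraded submodule `Im d'd''`. Summing over the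
components of `a` and `b` puts `d'a` and `d''b`, hence `x`, in `Im d'd''`.
-/

open LinearMap DirectSum

section Graded

variable {ι R V : Type*} [DecidableEq ι] [Semiring R] [AddCommMonoid V] [Module R V]
  (𝒦 : ι → Submodule R V) [Decomposition 𝒦]

theorem decompose_map_of_mapsTo [AddGroup ι] {f : V →ₗ[R] V} {σ : ι}
    (hf : ∀ i, ∀ x ∈ 𝒦 i, f x ∈ 𝒦 (i + σ)) (v : V) (i : ι) :
    (decompose 𝒦 (f v) (i + σ) : V) = f (decompose 𝒦 v i) := by
  induction v using Decomposition.inductionOn 𝒦 with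
  | zero => simp
  | @homogeneous j m =>
    by_cases hji : j = i
    · subst hji
      rw [decompose_of_mem_same 𝒦 m.2, decompose_of_mem_same 𝒦 (hf _ _ m.2)]
    · rw [decompose_of_mem_ne 𝒦 m.2 hji, decompose_of_mem_ne 𝒦 (hf _ _ m.2)
        ((add_left_injective σ).ne hji), map_zero]
  | add x y hx hy => simp [hx, hy]

theorem isHomogeneous_range [AddGroup ι] {f : V →ₗ[R] V} {σ : ι}
    (hf : ∀ i, ∀ x ∈ 𝒦 i, f x ∈ 𝒦 (i + σ)) :
    SetLike.IsHomogeneous 𝒦 (range f) := by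
  rintro i - ⟨c, rfl⟩
  refine ⟨decompose 𝒦 c (i - σ), ?_⟩
  rw [← decompose_map_of_mapsTo 𝒦 hf, sub_add_cancel]

theorem SetLike.IsHomogeneous.mem_of_add_mem {S : Submodule R V}
    (hS : SetLike.IsHomogeneous 𝒦 S) {x y : V} {i j : ι} (hx : x ∈ 𝒦 i) (hy : y ∈ 𝒦 j)
    (hji : j ≠ i) (hxy : x + y ∈ S) : x ∈ S := by
  simpa [decompose_of_mem_same 𝒦 hx, decompose_of_mem_ne 𝒦 hy hji] using hS i hxy

theorem mem_of_forall_decompose_mem {S : Submodule R V} {x : V}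
    (h : ∀ i, (decompose 𝒦 x i : V) ∈ S) : x ∈ S := by
  classical
  rw [← sum_support_decompose 𝒦 x]
  exact sum_mem fun i _ => h i

end Graded

section DoubleComplex

variable {R V : Type*} [Semiring R] [AddCommMonoid V] [Module R V] {d' d'' : V →ₗ[R] V}

theorem range_comp_le_ker_inf_ker_inf_range_add (hd'sq : d' ∘ₗ d' = 0)
    (hd''sq : d'' ∘ₗ d'' = 0) (hanti : d' ∘ₗ d'' + d'' ∘ₗ d' = 0) :
    range (d' ∘ₗ d'') ≤ ker d' ⊓ ker d'' ⊓ range (d' + d'') := by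
  rintro - ⟨c, rfl⟩
  have hc : d'' (d'' c) = 0 := by simpa using LinearMap.congr_fun hd''sq c
  refine ⟨⟨?_, ?_⟩, d'' c, by simp [hc]⟩
  · simpa using LinearMap.congr_fun hd'sq (d'' c)
  · simpa [hc] using LinearMap.congr_fun hanti (d'' c)

theorem add_apply_mem_range_comp
    (hddbar : ker d' ⊓ ker d'' ⊓ range (d' + d'') ≤ range (d' ∘ₗ d''))
    (hd'sq : d' ∘ₗ d' = 0) (hd''sq : d'' ∘ₗ d'' = 0) (hanti : d' ∘ₗ d'' + d'' ∘ₗ d' = 0)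
    {a : V} (ha : d' (d'' a) = 0) : (d' + d'') a ∈ range (d' ∘ₗ d'') := by
  have ha' : d'' (d' a) = 0 := by simpa [ha] using LinearMap.congr_fun hanti a
  refine hddbar ⟨⟨?_, ?_⟩, mem_range_self _ a⟩
  · simpa [ha] using LinearMap.congr_fun hd'sq a
  · simpa [ha'] using LinearMap.congr_fun hd''sq a

variable {ι : Type*} [AddGroup ι] [DecidableEq ι] (𝒦 : ι → Submodule R V) [Decomposition 𝒦]
  {σ' σ'' : ι}

theorem apply_mem_range_comp_of_comp_apply_eq_zero (hσ : σ' ≠ σ'')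
    (hd' : ∀ i, ∀ x ∈ 𝒦 i, d' x ∈ 𝒦 (i + σ')) (hd'' : ∀ i, ∀ x ∈ 𝒦 i, d'' x ∈ 𝒦 (i + σ''))
    (hddbar : ker d' ⊓ ker d'' ⊓ range (d' + d'') ≤ range (d' ∘ₗ d''))
    (hd'sq : d' ∘ₗ d' = 0) (hd''sq : d'' ∘ₗ d'' = 0) (hanti : d' ∘ₗ d'' + d'' ∘ₗ d' = 0)
    {a : V} (ha : d' (d'' a) = 0) :
    d' a ∈ range (d' ∘ₗ d'') ∧ d'' a ∈ range (d' ∘ₗ d'') := by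
  have hdd : ∀ i, ∀ x ∈ 𝒦 i, (d' ∘ₗ d'') x ∈ 𝒦 (i + (σ'' + σ')) := fun i x hx => by
    rw [← add_assoc]
    exact hd' _ _ (hd'' _ _ hx)
  have hR : SetLike.IsHomogeneous 𝒦 (range (d' ∘ₗ d'')) := isHomogeneous_range 𝒦 hdd
  suffices a ∈ (range (d' ∘ₗ d'')).comap d' ⊓ (range (d' ∘ₗ d'')).comap d'' from this
  refine mem_of_forall_decompose_mem 𝒦 fun i => ?_
  set A := (decompose 𝒦 a i : V)
  have hA : A ∈ 𝒦 i := (decompose 𝒦 a i).2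
  have hdA : d' (d'' A) = 0 := by
    rw [← comp_apply, ← decompose_map_of_mapsTo 𝒦 hdd, comp_apply, ha, decompose_zero,
      DirectSum.zero_apply, ZeroMemClass.coe_zero]
  have hDA := add_apply_mem_range_comp hddbar hd'sq hd''sq hanti hdA
  rw [LinearMap.add_apply] at hDA
  have hne : i + σ'' ≠ i + σ' := fun h => hσ (add_left_cancel h).symm
  exact ⟨SetLike.IsHomogeneous.mem_of_add_mem 𝒦 hR (hd' _ _ hA) (hd'' _ _ hA) hne hDA,
    SetLike.IsHomogeneous.mem_of_add_mem 𝒦 hR (hd'' _ _ hA) (hd' _ _ hA) hne.symm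
      (add_comm (d' A) _ ▸ hDA)⟩

theorem ker_inf_ker_inf_sup_le_range_comp (hσ : σ' ≠ σ'')
    (hd' : ∀ i, ∀ x ∈ 𝒦 i, d' x ∈ 𝒦 (i + σ')) (hd'' : ∀ i, ∀ x ∈ 𝒦 i, d'' x ∈ 𝒦 (i + σ''))
    (hddbar : ker d' ⊓ ker d'' ⊓ range (d' + d'') ≤ range (d' ∘ₗ d''))
    (hd'sq : d' ∘ₗ d' = 0) (hd''sq : d'' ∘ₗ d'' = 0) (hanti : d' ∘ₗ d'' + d'' ∘ₗ d' = 0) :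
    ker d' ⊓ ker d'' ⊓ (range d' ⊔ range d'') ≤ range (d' ∘ₗ d'') := by
  rintro x ⟨⟨hx', hx''⟩, hx⟩
  obtain ⟨-, ⟨a, rfl⟩, -, ⟨b, rfl⟩, rfl⟩ := Submodule.mem_sup.1 hx
  have hb : d' (d'' b) = 0 := by
    simpa [show d' (d' a) = 0 by simpa using LinearMap.congr_fun hd'sq a] using hx'
  have ha : d' (d'' a) = 0 := by
    have hda : d'' (d' a) = 0 := by
      simpa [show d'' (d'' b) = 0 by simpa using LinearMap.congr_fun hd''sq b] using hx''
    simpa [hda] using LinearMap.congr_fun hanti a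
  exact add_mem
    (apply_mem_range_comp_of_comp_apply_eq_zero 𝒦 hσ hd' hd'' hddbar hd'sq hd''sq hanti ha).1
    (apply_mem_range_comp_of_comp_apply_eq_zero 𝒦 hσ hd' hd'' hddbar hd'sq hd''sq hanti hb).2

end DoubleComplex

theorem deligne_lemma_equiv_1_general {R V : Type*} [CommRing R] [AddCommGroup V] [Module R V]
    (𝒦 : ℤ × ℤ → Submodule R V)
    (hinternal : DirectSum.IsInternal 𝒦)
    (d' d'' : V →ₗ[R] V)
    (hd'deg : ∀ p q : ℤ, ∀ x ∈ 𝒦 (p, q), d' x ∈ 𝒦 (p + 1, q))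
    (hd''deg : ∀ p q : ℤ, ∀ x ∈ 𝒦 (p, q), d'' x ∈ 𝒦 (p, q + 1))
    (hd'sq : d' ∘ₗ d' = 0) (hd''sq : d'' ∘ₗ d'' = 0)
    (hanti : d' ∘ₗ d'' + d'' ∘ₗ d' = 0) :
    (LinearMap.ker d' ⊓ LinearMap.ker d'' ⊓ LinearMap.range (d' + d'') =
        LinearMap.range (d' ∘ₗ d'')) ↔
      (LinearMap.ker d' ⊓ LinearMap.ker d'' ⊓ (LinearMap.range d' ⊔ LinearMap.range d'') = LinearMap.range (d' ∘ₗ d'')) := by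
  have : Decomposition 𝒦 := hinternal.chooseDecomposition
  have hd' : ∀ i, ∀ x ∈ 𝒦 i, d' x ∈ 𝒦 (i + (1, 0)) := fun ⟨p, q⟩ x hx => by
    simpa using hd'deg p q x hx
  have hd'' : ∀ i, ∀ x ∈ 𝒦 i, d'' x ∈ 𝒦 (i + (0, 1)) := fun ⟨p, q⟩ x hx => by
    simpa using hd''deg p q x hx
  have hσ : ((1, 0) : ℤ × ℤ) ≠ (0, 1) := by simp
  have hrange := range_comp_le_ker_inf_ker_inf_range_add hd'sq hd''sq hanti
  have hsup : ker d' ⊓ ker d'' ⊓ range (d' + d'') ≤ ker d' ⊓ ker d'' ⊓ (range d' ⊔ range d'') :=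
    inf_le_inf_left _ (range_add_le _ _)
  constructor
  · intro hddbar
    exact le_antisymm
      (ker_inf_ker_inf_sup_le_range_comp 𝒦 hσ hd' hd'' hddbar.le hd'sq hd''sq hanti)
      (hrange.trans hsup)
  · intro h
    exact le_antisymm (hsup.trans h.le) hrange

theorem deligne_lemma_equiv_1 {R V : Type*} [CommRing R] [AddCommGroup V] [Module R V]
    (𝒦 : ℤ × ℤ → Submodule R V)
    (hinternal : DirectSum.IsInternal 𝒦)
    (hbounded : {pq : ℤ × ℤ | 𝒦 pq ≠ ⊥}.Finite)
    (d' d'' : V →ₗ[R] V)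
    (hd'deg : ∀ p q : ℤ, ∀ x ∈ 𝒦 (p, q), d' x ∈ 𝒦 (p + 1, q))
    (hd''deg : ∀ p q : ℤ, ∀ x ∈ 𝒦 (p, q), d'' x ∈ 𝒦 (p, q + 1))
    (hd'sq : d' ∘ₗ d' = 0) (hd''sq : d'' ∘ₗ d'' = 0)
    (hanti : d' ∘ₗ d'' + d'' ∘ₗ d' = 0) :
    (LinearMap.ker d' ⊓ LinearMap.ker d'' ⊓ LinearMap.range (d' + d'') =
        LinearMap.range (d' ∘ₗ d'')) ↔
      (LinearMap.ker d' ⊓ LinearMap.ker d'' ⊓ (LinearMap.range d' ⊔ LinearMap.range d'') = LinearMap.range (d' ∘ₗ d'')) :=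
  deligne_lemma_equiv_1_general 𝒦 hinternal d' d'' hd'deg hd''deg hd'sq hd''sq hanti
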